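/- Let p range over a finite index set, ε_p ∈ ℝ, u^p ∈ ℝ³, ρ_p : ℝ³ → ℝ differentiable at x, U^p_{μν} = ∑_λ ε_{μνλ} u^p_λ, and R_{αβλδ}(y) = ∑_p ε_p ρ_p(y) U^p_{αβ} U^p_{λδ}. Suppose there is ϱ ∈ ℝ with u^p · ∇ρ_p(x) = ϱ for every p (each bundle's density changes along its direction at the common junction rate ϱ), and suppose ∑_p ε_p U^p_{αβ} = 0 for all α, β (the geometric closure relation of an oriented m-junction). Then the Bianchi combination vanishes: ∂_γ R_{αβλδ}(x) + ∂_λ R_{αβδγ}(x) + ∂_δ R_{αβγλ}(x) = 0 for all indices α, β, λ, δ, γ ∈ {1,2,3}. -/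

import Mathlib

open scoped BigOperators

/-- The totally antisymmetric Levi-Civita symbol on three indices, with `ε 0 1 2 = 1`. -/
def leviCivita3 (i j k : Fin 3) : ℝ :=
  if (i, j, k) = (0, 1, 2) ∨ (i, j, k) = (1, 2, 0) ∨ (i, j, k) = (2, 0, 1) then 1
  else if (i, j, k) = (0, 2, 1) ∨ (i, j, k) = (2, 1, 0) ∨ (i, j, k) = (1, 0, 2) then -1
  else 0

/-- The partial derivative of `f : ℝ³ → ℝ` at `x` in the `ν`-th coordinate direction. -/
noncomputable def pderiv3 (ν : Fin 3) (f : EuclideanSpace ℝ (Fin 3) → ℝ)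
    (x : EuclideanSpace ℝ (Fin 3)) : ℝ :=
  fderiv ℝ f x (EuclideanSpace.single ν 1)

/-!
Differentiating `R_{αβλδ} = ∑_p ε_p ρ_p U^p_{αβ} U^p_{λδ}` term by term, the Bianchi combination
becomes `∑_p ε_p U^p_{αβ} (U^p_{λδ} ∂_γ ρ_p + U^p_{δγ} ∂_λ ρ_p + U^p_{γλ} ∂_δ ρ_p)`. Since `U^p` is
the cross-product matrix of `u^p`, the cyclic sum in brackets equals `ε_{λδγ} (u^p · ∇ρ_p)`, which is
`ε_{λδγ} ϱ` for every bundle. The combination is therefore `ε_{λδγ} ϱ ∑_p ε_p U^p_{αβ}`, which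
vanishes by the closure relation.
-/

open Finset

lemma pderiv3_sum_const_mul {ι : Type*} [Fintype ι] (ν : Fin 3) (c : ι → ℝ)
    (f : ι → EuclideanSpace ℝ (Fin 3) → ℝ) (x : EuclideanSpace ℝ (Fin 3))
    (hf : ∀ p, DifferentiableAt ℝ (f p) x) :
    pderiv3 ν (fun y => ∑ p, c p * f p y) x = ∑ p, c p * pderiv3 ν (f p) x := by
  unfold pderiv3
  rw [fderiv_fun_sum fun p _ => (hf p).const_mul (c p), _root_.sum_apply]
  refine sum_congr rfl fun p _ => ?_
  rw [fderiv_const_mul (hf p) (c p)]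
  rfl

lemma leviCivita3_cyclic_sum_mul (a d : Fin 3 → ℝ) (lam δ γ : Fin 3) :
    (∑ l, leviCivita3 lam δ l * a l) * d γ + (∑ l, leviCivita3 δ γ l * a l) * d lam +
      (∑ l, leviCivita3 γ lam l * a l) * d δ =
    leviCivita3 lam δ γ * ∑ l, a l * d l := by
  fin_cases lam <;> fin_cases δ <;> fin_cases γ <;>
    simp +decide [leviCivita3, Fin.sum_univ_three] <;> ring

/-- If each bundle's density changes along its direction at the common junction rate `ϱ`
(`u^p · ∇ρ_p(x) = ϱ`) and the geometric closure relation `∑ p, ε_p U^p_{αβ} = 0` of an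
oriented m-junction holds, then the Bianchi combination of the skeleton-space Riemann
tensor vanishes. -/
theorem skeleton_bianchi_identity {ι : Type*} [Fintype ι]
    (ε : ι → ℝ) (u : ι → EuclideanSpace ℝ (Fin 3))
    (ρ : ι → EuclideanSpace ℝ (Fin 3) → ℝ) (x : EuclideanSpace ℝ (Fin 3))
    (hρ : ∀ p, DifferentiableAt ℝ (ρ p) x)
    (U : ι → Fin 3 → Fin 3 → ℝ)
    (hU : ∀ p, ∀ μ ν : Fin 3, U p μ ν = ∑ l : Fin 3, leviCivita3 μ ν l * u p l)
    (R : Fin 3 → Fin 3 → Fin 3 → Fin 3 → EuclideanSpace ℝ (Fin 3) → ℝ)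
    (hR : ∀ α β lam δ : Fin 3, ∀ y,
      R α β lam δ y = ∑ p, ε p * ρ p y * U p α β * U p lam δ)
    (ϱ : ℝ)
    (hflux : ∀ p, (∑ ν : Fin 3, u p ν * pderiv3 ν (ρ p) x) = ϱ)
    (hclosure : ∀ α β : Fin 3, ∑ p, ε p * U p α β = 0) :
    ∀ α β lam δ γ : Fin 3,
      pderiv3 γ (R α β lam δ) x + pderiv3 lam (R α β δ γ) x +
          pderiv3 δ (R α β γ lam) x = 0 := by
  intro α β lam δ γ
  have hderiv : ∀ l d g : Fin 3, pderiv3 g (R α β l d) x =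
      ∑ p, ε p * U p α β * U p l d * pderiv3 g (ρ p) x := by
    intro l d g
    have hR' : R α β l d = fun y => ∑ p, ε p * U p α β * U p l d * ρ p y :=
      funext fun y => (hR α β l d y).trans (sum_congr rfl fun p _ => by ring)
    rw [hR', pderiv3_sum_const_mul g _ ρ x hρ]
  have hbundle : ∀ p, ε p * U p α β * U p lam δ * pderiv3 γ (ρ p) x +
      ε p * U p α β * U p δ γ * pderiv3 lam (ρ p) x +
      ε p * U p α β * U p γ lam * pderiv3 δ (ρ p) x =
      leviCivita3 lam δ γ * ϱ * (ε p * U p α β) := by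
    intro p
    have hcyc := leviCivita3_cyclic_sum_mul (u p) (fun ν => pderiv3 ν (ρ p) x) lam δ γ
    rw [hU p lam δ, hU p δ γ, hU p γ lam]
    linear_combination ε p * U p α β * hcyc + ε p * U p α β * leviCivita3 lam δ γ * hflux p
  rw [hderiv, hderiv, hderiv, ← sum_add_distrib, ← sum_add_distrib,
    sum_congr rfl fun p _ => hbundle p, ← mul_sum, hclosure, mul_zero]
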